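/- For the Freund submanifold F₂ with parameters (a,b)=(α₁,β₁), the correlation coefficient is ρ = 1 − 4a²/(3a²+b²), and ρ ∈ (−1/3, 1) for all a,b>0. -/

import Mathlib

/-!
Write `U = min (X, Y)` and `V = |X - Y|`. On each of the two orderings the `F₂` density,
in the coordinates `(U, V)`, is `a b e^{-2aU} e^{-bV}`: so `U ∼ Exp(2a)` and `V ∼ Exp(b)` are
independent and `(X, Y)` is `(U, U + V)` or `(U + V, U)` with probability `1/2` each. Every moment
of order at most two is then a combination of moments of independent exponentials, giving
`E X = E Y = (a + b)/(2ab)`, `Var X = Var Y = (3a² + b²)/(4a²b²)` and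
`Cov(X, Y) = (b² - a²)/(4a²b²)`, hence `ρ = (b² - a²)/(3a² + b²)`.
-/

open MeasureTheory Real

/-- Density of the Freund submanifold `F₂` (`α₁ = α₂ = a`, `β₁ = β₂ = b`). -/
noncomputable def freundF2 (a b : ℝ) (x y : ℝ) : ℝ :=
  if 0 < x ∧ x < y then a * b * Real.exp (-b * y - (2 * a - b) * x)
  else if 0 < y ∧ y < x then a * b * Real.exp (-b * x - (2 * a - b) * y)
  else 0

/-- Expectation of `φ(x,y)` under the `F₂` density. -/
noncomputable def f2E (a b : ℝ) (φ : ℝ → ℝ → ℝ) : ℝ :=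
  ∫ x in Set.Ioi (0:ℝ), ∫ y in Set.Ioi (0:ℝ), φ x y * freundF2 a b x y

/-- Correlation coefficient of `X` and `Y` under the `F₂` density. -/
noncomputable def f2Rho (a b : ℝ) : ℝ :=
  (f2E a b (fun x y => x * y) - f2E a b (fun x _ => x) * f2E a b (fun _ y => y)) /
    (Real.sqrt (f2E a b (fun x _ => x ^ 2) - (f2E a b (fun x _ => x)) ^ 2) *
     Real.sqrt (f2E a b (fun _ y => y ^ 2) - (f2E a b (fun _ y => y)) ^ 2))

open Set

lemma integrableOn_pow_mul_exp_neg_mul_Ioi (k : ℕ) {c : ℝ} (hc : 0 < c) :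
    IntegrableOn (fun t : ℝ => t ^ k * exp (-(c * t))) (Ioi 0) := by
  refine (integrableOn_rpow_mul_exp_neg_mul_rpow (s := k) (p := 1)
    (by linarith [k.cast_nonneg (α := ℝ)]) one_pos hc).congr_fun (fun t _ => ?_) measurableSet_Ioi
  simp [rpow_natCast]

lemma integral_pow_mul_exp_neg_mul_Ioi (k : ℕ) {c : ℝ} (hc : 0 < c) :
    ∫ t in Ioi (0 : ℝ), t ^ k * exp (-(c * t)) = k.factorial / c ^ (k + 1) := by
  have h := integral_rpow_mul_exp_neg_mul_Ioi (a := k + 1) (by positivity) hc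
  rw [Gamma_nat_eq_factorial, add_sub_cancel_right, ← Nat.cast_succ, rpow_natCast] at h
  simp_rw [rpow_natCast] at h
  rw [h, one_div_pow, Nat.succ_eq_add_one]
  ring

local notation "μ₊" => volume.restrict (Ioi (0 : ℝ))

noncomputable def expMonomial (c d : ℝ) (i j : ℕ) (z : ℝ × ℝ) : ℝ :=
  z.1 ^ i * z.2 ^ j * (exp (-(c * z.1)) * exp (-(d * z.2)))

section ExpProduct

variable {c d : ℝ} (hc : 0 < c) (hd : 0 < d)
include hc hd

lemma integrable_expMonomial (i j : ℕ) : Integrable (expMonomial c d i j) (μ₊.prod μ₊) :=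
  ((integrableOn_pow_mul_exp_neg_mul_Ioi i hc).mul_prod
    (integrableOn_pow_mul_exp_neg_mul_Ioi j hd)).congr (ae_of_all _ fun z => by
      simp only [expMonomial]; ring)

lemma integral_expMonomial (i j : ℕ) :
    ∫ z, expMonomial c d i j z ∂(μ₊.prod μ₊)
      = i.factorial / c ^ (i + 1) * (j.factorial / d ^ (j + 1)) := by
  rw [← integral_pow_mul_exp_neg_mul_Ioi i hc, ← integral_pow_mul_exp_neg_mul_Ioi j hd,
    ← integral_prod_mul]
  congr 1 with z
  simp only [expMonomial]
  ring

variable {ψ : ℝ × ℝ → ℝ} (k s t p q r : ℝ)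
  (hψ : ∀ z, ψ z = k + s * z.1 + t * z.2 + p * z.1 ^ 2 + q * z.1 * z.2 + r * z.2 ^ 2)
include hψ

omit hc hd in
lemma quadratic_mul_exp_eq (z : ℝ × ℝ) :
    ψ z * (exp (-(c * z.1)) * exp (-(d * z.2)))
      = k * expMonomial c d 0 0 z + s * expMonomial c d 1 0 z + t * expMonomial c d 0 1 z
        + p * expMonomial c d 2 0 z + q * expMonomial c d 1 1 z + r * expMonomial c d 0 2 z := by
  simp only [hψ, expMonomial]
  ring

lemma integrable_quadratic_mul_exp_prod :
    Integrable (fun z => ψ z * (exp (-(c * z.1)) * exp (-(d * z.2)))) (μ₊.prod μ₊) := by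
  have := integrable_expMonomial hc hd
  simp only [quadratic_mul_exp_eq k s t p q r hψ]
  fun_prop

lemma integral_quadratic_mul_exp_prod :
    ∫ z, ψ z * (exp (-(c * z.1)) * exp (-(d * z.2))) ∂(μ₊.prod μ₊)
      = k / (c * d) + s / (c ^ 2 * d) + t / (c * d ^ 2) + 2 * p / (c ^ 3 * d)
        + q / (c ^ 2 * d ^ 2) + 2 * r / (c * d ^ 3) := by
  have := integrable_expMonomial hc hd
  simp only [quadratic_mul_exp_eq k s t p q r hψ]
  rw [integral_add (by fun_prop) (by fun_prop), integral_add (by fun_prop) (by fun_prop),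
    integral_add (by fun_prop) (by fun_prop), integral_add (by fun_prop) (by fun_prop),
    integral_add (by fun_prop) (by fun_prop)]
  simp only [integral_const_mul, integral_expMonomial hc hd]
  norm_num
  field_simp

end ExpProduct

noncomputable def f2Half (a b : ℝ) (x y : ℝ) : ℝ :=
  if 0 < x ∧ x < y then a * b * exp (-b * y - (2 * a - b) * x) else 0

lemma freundF2_eq_f2Half_add (a b x y : ℝ) :
    freundF2 a b x y = f2Half a b x y + f2Half a b y x := by
  unfold freundF2 f2Half
  split_ifs with h₁ h₂ h₂
  · exact absurd h₁.2 h₂.2.not_gt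
  all_goals ring

lemma mul_f2Half_shear (a b : ℝ) (G : ℝ × ℝ → ℝ) (z : ℝ × ℝ) :
    G (z.1, z.1 + z.2) * f2Half a b z.1 (z.1 + z.2) = (Ioi 0 ×ˢ Ioi 0).indicator
      (fun z => a * b * (G (z.1, z.1 + z.2) * (exp (-(2 * a * z.1)) * exp (-(b * z.2))))) z := by
  by_cases h : z ∈ Ioi (0 : ℝ) ×ˢ Ioi 0
  · rw [indicator_of_mem h, f2Half, if_pos ⟨h.1, by linarith [h.2.out]⟩, ← exp_add]
    ring_nf
  · have hz : ¬(0 < z.1 ∧ z.1 < z.1 + z.2) := fun h' =>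
      h ⟨h'.1, mem_Ioi.mpr (by linarith [h'.2])⟩
    rw [indicator_of_notMem h, f2Half, if_neg hz, mul_zero]

lemma integral_mul_f2Half (a b : ℝ) (G : ℝ × ℝ → ℝ) :
    ∫ z, G z * f2Half a b z.1 z.2 = a * b * ∫ z, G (z.1, z.1 + z.2) *
      (exp (-(2 * a * z.1)) * exp (-(b * z.2))) ∂(μ₊.prod μ₊) := by
  rw [Measure.volume_eq_prod, ← (measurePreserving_prod_add volume volume).integral_comp
    (MeasurableEquiv.shearAddRight ℝ).measurableEmbedding, ← integral_const_mul,
    Measure.prod_restrict, ← integral_indicator (measurableSet_Ioi.prod measurableSet_Ioi)]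
  simp only [mul_f2Half_shear]

lemma integrable_mul_f2Half (a b : ℝ) {G : ℝ × ℝ → ℝ}
    (hG : Integrable (fun z => G (z.1, z.1 + z.2) * (exp (-(2 * a * z.1)) * exp (-(b * z.2))))
      (μ₊.prod μ₊)) :
    Integrable (fun z => G z * f2Half a b z.1 z.2) := by
  rw [Measure.volume_eq_prod, ← (measurePreserving_prod_add volume volume).integrable_comp_emb
    (MeasurableEquiv.shearAddRight ℝ).measurableEmbedding]
  simp only [Function.comp_def, mul_f2Half_shear]
  rw [integrable_indicator_iff (measurableSet_Ioi.prod measurableSet_Ioi), IntegrableOn,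
    ← Measure.prod_restrict]
  exact hG.const_mul _

lemma integrable_shear_mul_exp_of_sq_growth {c d C : ℝ} (hc : 0 < c) (hd : 0 < d)
    {G : ℝ × ℝ → ℝ} (hG : Continuous G) (hC : ∀ z, |G z| ≤ C * (1 + z.1 ^ 2 + z.2 ^ 2)) :
    Integrable (fun z => G (z.1, z.1 + z.2) * (exp (-(c * z.1)) * exp (-(d * z.2))))
      (μ₊.prod μ₊) := by
  refine Integrable.mono' ((integrable_quadratic_mul_exp_prod hc hd
    (ψ := fun z => 1 + z.1 ^ 2 + (z.1 + z.2) ^ 2) 1 0 0 2 2 1 fun z => by ring).const_mul C)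
    (by fun_prop) (ae_of_all _ fun z => ?_)
  have hE : 0 ≤ exp (-(c * z.1)) * exp (-(d * z.2)) := by positivity
  rw [norm_mul, Real.norm_eq_abs, Real.norm_of_nonneg hE]
  calc |G (z.1, z.1 + z.2)| * _ ≤ C * (1 + z.1 ^ 2 + (z.1 + z.2) ^ 2) * _ :=
        mul_le_mul_of_nonneg_right (hC _) hE
    _ = _ := mul_assoc _ _ _

lemma f2E_eq_integral (a b : ℝ) {φ : ℝ → ℝ → ℝ}
    (hφ : Integrable (fun z : ℝ × ℝ => φ z.1 z.2 * freundF2 a b z.1 z.2)) :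
    f2E a b φ = ∫ z : ℝ × ℝ, φ z.1 z.2 * freundF2 a b z.1 z.2 := by
  have hQ : Integrable (fun z : ℝ × ℝ => φ z.1 z.2 * freundF2 a b z.1 z.2) (μ₊.prod μ₊) := by
    rw [Measure.prod_restrict, ← Measure.volume_eq_prod]
    exact hφ.restrict
  rw [f2E, ← integral_prod _ hQ, Measure.prod_restrict, ← Measure.volume_eq_prod,
    setIntegral_eq_integral_of_forall_compl_eq_zero]
  intro z hz
  have h₁ : ¬(0 < z.1 ∧ z.1 < z.2) := fun h => hz ⟨h.1, mem_Ioi.mpr (h.1.trans h.2)⟩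
  have h₂ : ¬(0 < z.2 ∧ z.2 < z.1) := fun h => hz ⟨mem_Ioi.mpr (h.1.trans h.2), h.1⟩
  rw [freundF2, if_neg h₁, if_neg h₂, mul_zero]

theorem f2E_eq_integral_shear {a b C : ℝ} (ha : 0 < a) (hb : 0 < b) {φ : ℝ → ℝ → ℝ}
    (hφ : Continuous (Function.uncurry φ)) (hC : ∀ x y, |φ x y| ≤ C * (1 + x ^ 2 + y ^ 2)) :
    f2E a b φ = a * b * ∫ z, (φ z.1 (z.1 + z.2) + φ (z.1 + z.2) z.1) *
      (exp (-(2 * a * z.1)) * exp (-(b * z.2))) ∂(μ₊.prod μ₊) := by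
  have h2a : 0 < 2 * a := by positivity
  have hI₁ := integrable_shear_mul_exp_of_sq_growth h2a hb (G := fun z => φ z.1 z.2) hφ
    fun z => hC z.1 z.2
  have hI₂ := integrable_shear_mul_exp_of_sq_growth h2a hb (G := fun z => φ z.2 z.1)
    (hφ.comp continuous_swap) fun z => (hC z.2 z.1).trans_eq (by ring)
  have hT₁ := integrable_mul_f2Half a b (G := fun z => φ z.1 z.2) hI₁
  have hT₂ : Integrable fun z : ℝ × ℝ => φ z.1 z.2 * f2Half a b z.2 z.1 :=
    (integrable_mul_f2Half a b (G := fun z => φ z.2 z.1) hI₂).swap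
  calc f2E a b φ
      = ∫ z : ℝ × ℝ, φ z.1 z.2 * f2Half a b z.1 z.2 + φ z.1 z.2 * f2Half a b z.2 z.1 := by
        rw [f2E_eq_integral a b ((hT₁.add hT₂).congr (ae_of_all _ fun z => by
          simp only [Pi.add_apply, freundF2_eq_f2Half_add, mul_add]))]
        simp only [freundF2_eq_f2Half_add, mul_add]
    _ = (∫ z : ℝ × ℝ, φ z.1 z.2 * f2Half a b z.1 z.2)
          + ∫ z : ℝ × ℝ, φ z.2 z.1 * f2Half a b z.1 z.2 := by
        rw [integral_add hT₁ hT₂]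
        congr 1
        exact integral_prod_swap fun z : ℝ × ℝ => φ z.2 z.1 * f2Half a b z.1 z.2
    _ = _ := by
        rw [integral_mul_f2Half a b (fun z => φ z.1 z.2),
          integral_mul_f2Half a b (fun z => φ z.2 z.1), ← mul_add, ← integral_add hI₁ hI₂]
        simp only [add_mul]

section Moments

variable {a b : ℝ} (ha : 0 < a) (hb : 0 < b)
include ha hb

lemma f2E_fst : f2E a b (fun x _ => x) = (a + b) / (2 * a * b) := by
  rw [f2E_eq_integral_shear ha hb (C := 1) (by fun_prop) fun x y =>
      abs_le.mpr ⟨by nlinarith [sq_nonneg (x + 1), sq_nonneg y],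
        by nlinarith [sq_nonneg (x - 1), sq_nonneg y]⟩,
    integral_quadratic_mul_exp_prod (by positivity) hb 0 2 1 0 0 0 fun z => by ring]
  field_simp
  ring

lemma f2E_fst_sq :
    f2E a b (fun x _ => x ^ 2) = (2 * a ^ 2 + a * b + b ^ 2) / (2 * a ^ 2 * b ^ 2) := by
  rw [f2E_eq_integral_shear ha hb (C := 1) (by fun_prop) fun x y => by
      rw [abs_of_nonneg (sq_nonneg x)]; nlinarith [sq_nonneg y],
    integral_quadratic_mul_exp_prod (by positivity) hb 0 0 0 2 2 1 fun z => by ring]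
  field_simp
  ring

lemma f2E_mul : f2E a b (fun x y => x * y) = (a + b) / (2 * a ^ 2 * b) := by
  rw [f2E_eq_integral_shear ha hb (C := 1) (by fun_prop) fun x y =>
      abs_le.mpr ⟨by nlinarith [sq_nonneg (x + y)], by nlinarith [sq_nonneg (x - y)]⟩,
    integral_quadratic_mul_exp_prod (by positivity) hb 0 0 0 2 2 0 fun z => by ring]
  field_simp
  ring

lemma f2E_snd : f2E a b (fun _ y => y) = (a + b) / (2 * a * b) := by
  rw [f2E_eq_integral_shear ha hb (C := 1) (by fun_prop) fun x y =>
      abs_le.mpr ⟨by nlinarith [sq_nonneg (y + 1), sq_nonneg x],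
        by nlinarith [sq_nonneg (y - 1), sq_nonneg x]⟩,
    integral_quadratic_mul_exp_prod (by positivity) hb 0 2 1 0 0 0 fun z => by ring]
  field_simp
  ring

lemma f2E_snd_sq :
    f2E a b (fun _ y => y ^ 2) = (2 * a ^ 2 + a * b + b ^ 2) / (2 * a ^ 2 * b ^ 2) := by
  rw [f2E_eq_integral_shear ha hb (C := 1) (by fun_prop) fun x y => by
      rw [abs_of_nonneg (sq_nonneg y)]; nlinarith [sq_nonneg x],
    integral_quadratic_mul_exp_prod (by positivity) hb 0 0 0 2 2 1 fun z => by ring]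
  field_simp
  ring

lemma f2Rho_eq : f2Rho a b = (b ^ 2 - a ^ 2) / (3 * a ^ 2 + b ^ 2) := by
  have hvar : (2 * a ^ 2 + a * b + b ^ 2) / (2 * a ^ 2 * b ^ 2) - ((a + b) / (2 * a * b)) ^ 2
      = (3 * a ^ 2 + b ^ 2) / (4 * a ^ 2 * b ^ 2) := by
    field_simp
    ring
  rw [f2Rho, f2E_mul ha hb, f2E_fst ha hb, f2E_snd ha hb, f2E_fst_sq ha hb, f2E_snd_sq ha hb,
    hvar, Real.mul_self_sqrt (by positivity)]
  field_simp
  ring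

end Moments

theorem freundF2_correlation (a b : ℝ) (ha : 0 < a) (hb : 0 < b) :
    f2Rho a b = 1 - 4 * a ^ 2 / (3 * a ^ 2 + b ^ 2) ∧
    -1 / 3 < f2Rho a b ∧ f2Rho a b < 1 := by
  have hden : 0 < 3 * a ^ 2 + b ^ 2 := by positivity
  rw [f2Rho_eq ha hb]
  refine ⟨by field_simp; ring, ?_, ?_⟩
  · rw [lt_div_iff₀ hden]
    nlinarith [mul_pos hb hb]
  · rw [div_lt_one hden]
    nlinarith [mul_pos ha ha]
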